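/- Let α > 0, let μ : ℝ → ℝ be continuous and nonnegative, let φ : [0,∞) → ℝ be locally integrable, and let b₁ : ℝ → ℝ be continuously differentiable and positive. Define n on the quadrant {a ≥ 0, t ≥ 0} by: n(a,t) = φ(a−t)·exp(−∫₀^t μ(s + a − t) ds) if t < a, and n(a,t) = (∏_{i=1}^{m} b₁(t − a − (i−1)α)) · φ(mα + a − t) · exp(−∫₀^{t−a−(m−1)α} μ(s + mα + a − t) ds) · exp(−(m−1)·∫₀^α μ(s) ds) · exp(−∫₀^a μ(s) ds) if t ≥ a, where m = ⌊(t−a)/α⌋ + 1. Then n is locally integrable and is a weak solution of the McKendrick equation on all of the open quadrant: for every smooth ψ : ℝ² → ℝ with compact support contained in Q = {(a,t) : a > 0, t > 0}, ∬_Q (∂ψ/∂t + ∂ψ/∂a − μ(a)ψ)·n da dt = 0. -/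

import Mathlib

open MeasureTheory Real Set
open MeasureTheory Real Set

namespace McKAux

noncomputable def P (μ : ℝ → ℝ) (x : ℝ) : ℝ := ∫ s in (0:ℝ)..x, μ s

lemma hP_deriv {μ : ℝ → ℝ} (hμc : Continuous μ) (x : ℝ) : HasDerivAt (P μ) (μ x) x :=
  intervalIntegral.integral_hasDerivAt_right (hμc.intervalIntegrable _ _)
    (hμc.stronglyMeasurable.stronglyMeasurableAtFilter) hμc.continuousAt

lemma P_cont {μ : ℝ → ℝ} (hμc : Continuous μ) : Continuous (P μ) :=
  continuous_iff_continuousAt.2 fun x => (hP_deriv hμc x).continuousAt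

lemma P_shift {μ : ℝ → ℝ} (hμc : Continuous μ) (u v : ℝ) :
    ∫ s in (0:ℝ)..u, μ (s + v) = P μ (u + v) - P μ v := by
  rw [intervalIntegral.integral_comp_add_right (fun s => μ s) v, zero_add]
  have := intervalIntegral.integral_add_adjacent_intervals (μ := volume)
    (hμc.intervalIntegrable 0 v) (hμc.intervalIntegrable v (u + v))
  unfold P; linarith

noncomputable def Ee (μ : ℝ → ℝ) (a : ℝ) : ℝ := Real.exp (-(P μ a))

lemma Ee_deriv {μ : ℝ → ℝ} (hμc : Continuous μ) (a : ℝ) :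
    HasDerivAt (Ee μ) (-(μ a) * Ee μ a) a := by
  have h := ((hP_deriv hμc a).neg).exp
  show HasDerivAt (fun x => Real.exp (-(P μ x))) (-(μ a) * Ee μ a) a
  simpa [Ee, mul_comm] using h

lemma Ee_pos {μ : ℝ → ℝ} (a : ℝ) : 0 < Ee μ a := Real.exp_pos _

noncomputable def W (α : ℝ) (μ φ b₁ : ℝ → ℝ) (m : ℕ) (c : ℝ) : ℝ :=
  (∏ i ∈ Finset.range m, b₁ (-c - (i : ℝ) * α)) * φ ((m : ℝ) * α + c) *
    Real.exp (P μ ((m : ℝ) * α + c) - (m : ℝ) * P μ α)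

noncomputable def F (α : ℝ) (μ φ b₁ : ℝ → ℝ) (c : ℝ) : ℝ :=
  W α μ φ b₁ (⌊(-c) / α⌋ + 1).toNat c

lemma F_pos_eq {α : ℝ} (hα : 0 < α) (μ φ b₁ : ℝ → ℝ) {c : ℝ} (hc : 0 < c) :
    F α μ φ b₁ c = φ c * Real.exp (P μ c) := by
  have h1 : (-c) / α < 0 := div_neg_of_neg_of_pos (by linarith) hα
  have h2 : ⌊(-c) / α⌋ < 0 := by
    rw [Int.floor_lt]; exact h1.trans_le (by norm_num)
  have h3 : (⌊(-c) / α⌋ + 1).toNat = 0 := by omega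
  simp [F, h3, W]

lemma F_strip_eq {α : ℝ} (hα : 0 < α) (μ φ b₁ : ℝ → ℝ) (k : ℕ) {c : ℝ}
    (hc : c ∈ Set.Ioc (-((k : ℝ) + 1) * α) (-(k : ℝ) * α)) :
    F α μ φ b₁ c = W α μ φ b₁ (k + 1) c := by
  have hfl : ⌊(-c) / α⌋ = (k : ℤ) := by
    rw [Int.floor_eq_iff]
    constructor
    · rw [le_div_iff₀ hα]; push_cast; nlinarith [hc.2]
    · rw [div_lt_iff₀ hα]; push_cast; nlinarith [hc.1]
  have : (⌊(-c) / α⌋ + 1).toNat = k + 1 := by rw [hfl]; omega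
  rw [F, this]

end McKAux

namespace McKAux
open intervalIntegral

lemma integrableOn_comp_const_add (f : ℝ → ℝ) (d : ℝ) (A : Set ℝ) (hA : MeasurableSet A)
    (h : IntegrableOn f A volume) :
    IntegrableOn (fun x => f (d + x)) ((fun x : ℝ => d + x) ⁻¹' A) volume := by
  have h1 : MeasurePreserving (fun x : ℝ => d + x)
      (volume.restrict ((fun x : ℝ => d + x) ⁻¹' A)) (volume.restrict A) :=
    (measurePreserving_add_left volume d).restrict_preimage hA
  exact (h1.integrable_comp_emb (MeasurableEquiv.addLeft d).measurableEmbedding).2 h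

lemma F_locInt {α : ℝ} {μ φ b₁ : ℝ → ℝ} (hα : 0 < α) (hμc : Continuous μ)
    (hφ : LocallyIntegrableOn φ (Set.Ici 0) volume) (hb₁c : Continuous b₁) :
    LocallyIntegrable (F α μ φ b₁) volume := by
  have hPc := P_cont hμc
  rw [locallyIntegrable_iff]
  intro K hK
  obtain ⟨R, hRK⟩ := hK.isBounded.subset_closedBall 0
  have hRK' : K ⊆ Set.Icc (-R) R := by
    intro x hx
    have := hRK hx
    rw [Real.closedBall_eq_Icc] at this
    simpa using this
  set M : ℕ := ⌈R / α⌉₊ + 1 with hM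
  have hMα : R < (M : ℝ) * α := by
    have h1 : R / α ≤ (⌈R / α⌉₊ : ℝ) := Nat.le_ceil _
    have : R / α < (M : ℝ) := by rw [hM]; push_cast; linarith
    calc R = (R / α) * α := by field_simp
    _ < (M : ℝ) * α := by exact mul_lt_mul_of_pos_right this hα
  -- integrable on positive part
  have hpos : IntegrableOn (F α μ φ b₁) (Set.Ioc 0 R) volume := by
    have hφR : IntegrableOn φ (Set.Icc 0 (max R 0)) volume :=
      hφ.integrableOn_compact_subset (fun x hx => hx.1) isCompact_Icc
    have h2 : IntegrableOn (fun c => φ c * Real.exp (P μ c)) (Set.Icc 0 (max R 0)) volume :=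
      hφR.mul_continuousOn ((hPc.rexp).continuousOn) isCompact_Icc
    have h3 : IntegrableOn (fun c => φ c * Real.exp (P μ c)) (Set.Ioc 0 R) volume :=
      h2.mono_set (fun x hx => ⟨le_of_lt hx.1, le_trans hx.2 (le_max_left _ _)⟩)
    exact h3.congr_fun (fun c hc => (F_pos_eq hα μ φ b₁ hc.1).symm) measurableSet_Ioc
  -- integrable on each strip
  have hstrip : ∀ k : ℕ, IntegrableOn (F α μ φ b₁)
      (Set.Ioc (-((k : ℝ) + 1) * α) (-(k : ℝ) * α)) volume := by
    intro k
    set d : ℝ := ((k : ℝ) + 1) * α with hd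
    set J : Set ℝ := Set.Ioc (-((k : ℝ) + 1) * α) (-(k : ℝ) * α) with hJ
    have hφα : IntegrableOn φ (Set.Ioc 0 α) volume :=
      (hφ.integrableOn_compact_subset (fun x hx => hx.1) isCompact_Icc).mono_set
        Set.Ioc_subset_Icc_self
    have htrans : IntegrableOn (fun c => φ (d + c)) J volume := by
      have := integrableOn_comp_const_add φ d (Set.Ioc 0 α) measurableSet_Ioc hφα
      have hset : (fun x : ℝ => d + x) ⁻¹' (Set.Ioc 0 α) = J := by
        rw [Set.preimage_const_add_Ioc, hJ, hd]; congr 1 <;> ring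
      rwa [hset] at this
    set Cg : ℝ → ℝ := fun c =>
      (∏ i ∈ Finset.range (k + 1), b₁ (-c - (i : ℝ) * α)) *
        Real.exp (P μ (d + c) - ((k : ℝ) + 1) * P μ α) with hCg
    have hCgc : Continuous Cg := by
      apply Continuous.mul
      · exact continuous_finset_prod _ fun i _ => hb₁c.comp (by continuity)
      · exact ((hPc.comp (by continuity)).sub continuous_const).rexp
    have h4 : IntegrableOn (fun c => Cg c * φ (d + c)) J volume := by
      refine IntegrableOn.continuousOn_mul_of_subset hCgc.continuousOn htrans
        isCompact_Icc measurableSet_Ioc Set.Ioc_subset_Icc_self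
    refine h4.congr_fun (fun c hc => ?_) measurableSet_Ioc
    rw [F_strip_eq hα μ φ b₁ k hc, W, hCg]
    have h5 : ((k + 1 : ℕ) : ℝ) = (k : ℝ) + 1 := by push_cast; ring
    rw [h5]
    have h6 : ((k : ℝ) + 1) * α + c = d + c := by rw [hd]
    rw [h6]; ring
  -- covering
  have hcover : Set.Icc (-R) R ⊆ Set.Ioc 0 R ∪
      ⋃ k ∈ Finset.range M, Set.Ioc (-((k : ℝ) + 1) * α) (-(k : ℝ) * α) := by
    intro x hx
    by_cases h0 : 0 < x
    · exact Or.inl ⟨h0, hx.2⟩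
    · push_neg at h0
      right
      set k : ℕ := ⌊(-x) / α⌋₊ with hk
      have hxn : 0 ≤ (-x) / α := div_nonneg (by linarith) hα.le
      have hfl : (k : ℝ) ≤ (-x) / α := Nat.floor_le hxn
      have hfl2 : (-x) / α < (k : ℝ) + 1 := Nat.lt_floor_add_one _
      have hklt : k < M := by
        have hxR : -x ≤ R := by linarith [hx.1]
        have : (k : ℝ) ≤ (-x) / α := hfl
        have h7 : (-x) / α < (M : ℝ) := by
          rw [div_lt_iff₀ hα]; linarith
        have : (k : ℝ) < (M : ℝ) := lt_of_le_of_lt hfl h7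
        exact_mod_cast this
      refine Set.mem_biUnion (Finset.mem_range.2 hklt) ?_
      constructor
      · have : -x < ((k : ℝ) + 1) * α := by rwa [div_lt_iff₀ hα] at hfl2
        linarith
      · have : (k : ℝ) * α ≤ -x := by rwa [le_div_iff₀ hα] at hfl
        linarith
  refine IntegrableOn.mono_set ?_ hRK'
  refine IntegrableOn.mono_set ?_ hcover
  exact hpos.union (integrableOn_finset_iUnion.2 fun k _ => hstrip k)

end McKAux

namespace McKAux

def shear : ℝ × ℝ ≃ᵐ ℝ × ℝ where
  toFun := fun q => (q.1 + q.2, q.2)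
  invFun := fun p => (p.1 - p.2, p.2)
  left_inv := fun q => by simp
  right_inv := fun p => by simp
  measurable_toFun := (measurable_fst.add measurable_snd).prodMk measurable_snd
  measurable_invFun := (measurable_fst.sub measurable_snd).prodMk measurable_snd

lemma shear_mp : MeasurePreserving (shear : ℝ × ℝ → ℝ × ℝ) volume volume := by
  have h0 : MeasurePreserving (fun q : ℝ × ℝ => (q.1, q.2 + q.1))
      (volume.prod volume) (volume.prod volume) := by
    refine MeasurePreserving.skew_product (g := fun (a c : ℝ) => c + a)
      (MeasurePreserving.id volume)
      (measurable_snd.add measurable_fst) (Filter.Eventually.of_forall fun a => ?_)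
    exact (measurePreserving_add_right volume a).map_eq
  have h1 : MeasurePreserving (Prod.swap : ℝ × ℝ → ℝ × ℝ)
      (volume.prod volume) (volume.prod volume) := Measure.measurePreserving_swap
  have h2 := (h1.comp h0).comp h1
  have he : ((Prod.swap ∘ (fun q : ℝ × ℝ => (q.1, q.2 + q.1))) ∘ Prod.swap)
      = (shear : ℝ × ℝ → ℝ × ℝ) := by
    funext q; rfl
  rw [he] at h2
  rwa [Measure.volume_eq_prod]

end McKAux

namespace McKAux

lemma integrable_fst_mul {Fc : ℝ → ℝ} (hF : LocallyIntegrable Fc volume)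
    {G : ℝ × ℝ → ℝ} (hGm : AEStronglyMeasurable G (volume : Measure (ℝ × ℝ)))
    {C r s : ℝ} (hC : 0 ≤ C)
    (hsupp : ∀ q : ℝ × ℝ, G q ≠ 0 → q.1 ∈ Set.Icc (-r) r ∧ q.2 ∈ Set.Icc (-s) s)
    (hbd : ∀ q : ℝ × ℝ, ‖G q‖ ≤ C) :
    Integrable (fun q : ℝ × ℝ => Fc q.1 * G q) volume := by
  have hFm : AEStronglyMeasurable (fun q : ℝ × ℝ => Fc q.1) (volume : Measure (ℝ × ℝ)) := by
    rw [Measure.volume_eq_prod]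
    exact hF.aestronglyMeasurable.comp_quasiMeasurePreserving Measure.quasiMeasurePreserving_fst
  set B : ℝ × ℝ → ℝ := fun q =>
    ((Set.Icc (-r) r).indicator (fun c => ‖Fc c‖) q.1) *
      ((Set.Icc (-s) s).indicator (fun _ => C) q.2) with hB
  have hBint : Integrable B volume := by
    rw [Measure.volume_eq_prod]
    refine Integrable.mul_prod ?_ ?_
    · exact (integrable_indicator_iff measurableSet_Icc).2 (hF.integrableOn_isCompact isCompact_Icc).norm
    · exact (integrable_indicator_iff measurableSet_Icc).2
        ((integrableOn_const_iff (C := C)).2 (Or.inr measure_Icc_lt_top))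
  refine hBint.mono' (hFm.mul hGm) (Filter.Eventually.of_forall fun q => ?_)
  by_cases hG : G q = 0
  · simp only [hG, mul_zero, norm_zero, hB]
    exact mul_nonneg (Set.indicator_nonneg (fun c _ => norm_nonneg _) _)
      (Set.indicator_nonneg (fun c _ => hC) _)
  · obtain ⟨h1, h2⟩ := hsupp q hG
    rw [hB]
    simp only [Set.indicator_of_mem h1, Set.indicator_of_mem h2]
    rw [norm_mul]
    exact mul_le_mul_of_nonneg_left (hbd q) (norm_nonneg _)

lemma shear_comp_bound {Fc : ℝ → ℝ} (hF : LocallyIntegrable Fc volume)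
    {δ : ℝ × ℝ → ℝ} (hδm : AEStronglyMeasurable δ (volume : Measure (ℝ × ℝ)))
    {R C : ℝ} (hR : 0 ≤ R) (hC : 0 ≤ C)
    (hsupp : ∀ p : ℝ × ℝ, δ p ≠ 0 → ‖p‖ ≤ R) (hbd : ∀ p, ‖δ p‖ ≤ C) :
    Integrable (fun q : ℝ × ℝ => Fc q.1 * δ (q.1 + q.2, q.2)) volume := by
  refine integrable_fst_mul hF ?_ hC (r := 2 * R) (s := R) ?_ (fun q => hbd _)
  · exact hδm.comp_quasiMeasurePreserving shear_mp.quasiMeasurePreserving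
  · intro q hq
    have h := hsupp _ hq
    have h1 : |q.1 + q.2| ≤ R := by
      have := norm_fst_le ((q.1 + q.2, q.2) : ℝ × ℝ)
      simp only [Real.norm_eq_abs] at this ⊢
      exact le_trans this h
    have h2 : |q.2| ≤ R := by
      have := norm_snd_le ((q.1 + q.2, q.2) : ℝ × ℝ)
      simp only [Real.norm_eq_abs] at this ⊢
      exact le_trans this h
    rw [abs_le] at h1 h2
    constructor
    · constructor <;> [linarith [h1.1, h2.2]; linarith [h1.2, h2.1]]
    · exact ⟨by linarith [h2.1], h2.2⟩

end McKAux

namespace McKAux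

lemma g_locInt {Fc E : ℝ → ℝ} (hF : LocallyIntegrable Fc volume) (hE : Continuous E) :
    LocallyIntegrable (fun p : ℝ × ℝ => Fc (p.1 - p.2) * E p.1) volume := by
  rw [locallyIntegrable_iff]
  intro K hK
  obtain ⟨R₀, hRK₀⟩ := hK.isBounded.subset_closedBall 0
  set R := max R₀ 0 with hRdef
  have hR : 0 ≤ R := le_max_right _ _
  have hRK : K ⊆ Metric.closedBall 0 R :=
    hRK₀.trans (Metric.closedBall_subset_closedBall (le_max_left _ _))
  obtain ⟨C₀, hC₀⟩ := (isCompact_Icc (a := -R) (b := R)).exists_bound_of_continuousOn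
    hE.continuousOn
  set C := max C₀ 0 with hCdef
  have hC : 0 ≤ C := le_max_right _ _
  set δ : ℝ × ℝ → ℝ := K.indicator (fun p => E p.1) with hδ
  have hδm : AEStronglyMeasurable δ (volume : Measure (ℝ × ℝ)) :=
    ((hE.comp continuous_fst).aestronglyMeasurable).indicator hK.measurableSet
  have hsupp : ∀ p : ℝ × ℝ, δ p ≠ 0 → ‖p‖ ≤ R := by
    intro p hp
    have hpK : p ∈ K := by
      by_contra h
      exact hp (Set.indicator_of_notMem h _)
    exact mem_closedBall_zero_iff.1 (hRK hpK)
  have hbd : ∀ p, ‖δ p‖ ≤ C := by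
    intro p
    by_cases hpK : p ∈ K
    · rw [hδ, Set.indicator_of_mem hpK]
      refine le_trans (hC₀ p.1 ?_) (le_max_left _ _)
      have h1 : ‖p.1‖ ≤ R := le_trans (norm_fst_le p) (mem_closedBall_zero_iff.1 (hRK hpK))
      rw [Real.norm_eq_abs, abs_le] at h1
      exact ⟨h1.1, h1.2⟩
    · rw [hδ, Set.indicator_of_notMem hpK]; simpa using hC
  have hint := shear_comp_bound hF hδm hR hC hsupp hbd
  have hcongr : (fun q : ℝ × ℝ => Fc q.1 * δ (q.1 + q.2, q.2)) =
      (Set.indicator K (fun p : ℝ × ℝ => Fc (p.1 - p.2) * E p.1)) ∘ shear := by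
    funext q
    show Fc q.1 * δ (q.1 + q.2, q.2) =
      Set.indicator K (fun p : ℝ × ℝ => Fc (p.1 - p.2) * E p.1) (q.1 + q.2, q.2)
    by_cases h : ((q.1 + q.2, q.2) : ℝ × ℝ) ∈ K
    · rw [hδ, Set.indicator_of_mem h, Set.indicator_of_mem h]
      simp
    · rw [hδ, Set.indicator_of_notMem h, Set.indicator_of_notMem h, mul_zero]
  rw [hcongr] at hint
  rw [← integrable_indicator_iff hK.measurableSet]
  exact (shear_mp.integrable_comp_emb shear.measurableEmbedding).1 hint

end McKAux

open McKAux

/-- The full piecewise characteristic solution of the McKendrick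
equation with one reproductive age class (boundary condition
`n(0,t) = b₁(t) n(α,t)`) and locally integrable initial data `φ` is locally
integrable and is a weak solution on the open quadrant
`Q = {(a,t) : a > 0, t > 0}`. Here, for `t ≥ a`, `m = ⌊(t−a)/α⌋ + 1`. -/
theorem mckendrick_weak_solution_one_age_class
    (α : ℝ) (hα : 0 < α)
    (μ : ℝ → ℝ) (hμc : Continuous μ) (hμ0 : ∀ x, 0 ≤ μ x)
    (φ : ℝ → ℝ) (hφ : MeasureTheory.LocallyIntegrableOn φ (Set.Ici 0) volume)
    (b₁ : ℝ → ℝ) (hb₁ : ContDiff ℝ 1 b₁) (hb₁pos : ∀ t, 0 < b₁ t)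
    (n : ℝ × ℝ → ℝ)
    (hn₁ : ∀ p : ℝ × ℝ, 0 ≤ p.1 → 0 ≤ p.2 → p.2 < p.1 →
      n p = φ (p.1 - p.2) * Real.exp (-(∫ s in (0:ℝ)..p.2, μ (s + p.1 - p.2))))
    (hn₂ : ∀ p : ℝ × ℝ, 0 ≤ p.1 → p.1 ≤ p.2 →
      ∀ m : ℕ, (m : ℤ) = ⌊(p.2 - p.1) / α⌋ + 1 →
      n p = (∏ i ∈ Finset.range m, b₁ (p.2 - p.1 - (i : ℝ) * α)) *
        φ ((m : ℝ) * α + p.1 - p.2) *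
        Real.exp (-(∫ s in (0:ℝ)..(p.2 - p.1 - ((m : ℝ) - 1) * α),
          μ (s + (m : ℝ) * α + p.1 - p.2))) *
        Real.exp (-(((m : ℝ) - 1) * ∫ s in (0:ℝ)..α, μ s)) *
        Real.exp (-(∫ s in (0:ℝ)..p.1, μ s))) :
    MeasureTheory.LocallyIntegrableOn n {p : ℝ × ℝ | 0 < p.1 ∧ 0 < p.2} volume ∧
    (∀ ψ : ℝ × ℝ → ℝ, ContDiff ℝ (⊤ : ℕ∞) ψ → HasCompactSupport ψ →
      tsupport ψ ⊆ {p : ℝ × ℝ | 0 < p.1 ∧ 0 < p.2} →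
      ∫ p in {p : ℝ × ℝ | 0 < p.1 ∧ 0 < p.2},
        (fderiv ℝ ψ p ((0:ℝ), (1:ℝ)) + fderiv ℝ ψ p ((1:ℝ), (0:ℝ))
          - μ p.1 * ψ p) * n p = 0) := by
  set Q : Set (ℝ × ℝ) := {p : ℝ × ℝ | 0 < p.1 ∧ 0 < p.2} with hQdef
  have hQopen : IsOpen Q := by
    have : Q = {p : ℝ × ℝ | 0 < p.1} ∩ {p : ℝ × ℝ | 0 < p.2} := rfl
    rw [this]
    exact (isOpen_lt continuous_const continuous_fst).inter
      (isOpen_lt continuous_const continuous_snd)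
  have hQmeas : MeasurableSet Q := hQopen.measurableSet
  set Fc : ℝ → ℝ := F α μ φ b₁ with hFcdef
  have hPα : ∀ x : ℝ, P μ x = ∫ s in (0:ℝ)..x, μ s := fun _ => rfl
  have hEe : ∀ a : ℝ, Ee μ a = Real.exp (-(∫ s in (0:ℝ)..a, μ s)) := fun _ => rfl
  -- factorization
  have hfact : ∀ p : ℝ × ℝ, 0 ≤ p.1 → 0 ≤ p.2 → n p = Fc (p.1 - p.2) * Ee μ p.1 := by
    intro p ha ht
    by_cases hlt : p.2 < p.1
    · rw [hn₁ p ha ht hlt, hFcdef, F_pos_eq hα μ φ b₁ (by linarith)]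
      have h1 : ∫ s in (0:ℝ)..p.2, μ (s + p.1 - p.2)
          = P μ (p.2 + (p.1 - p.2)) - P μ (p.1 - p.2) := by
        rw [← P_shift hμc p.2 (p.1 - p.2)]
        apply intervalIntegral.integral_congr
        intro s _; congr 1; ring
      have h2 : p.2 + (p.1 - p.2) = p.1 := by ring
      rw [h1, h2, Ee, mul_assoc, ← Real.exp_add]
      congr 1; ring
    · push_neg at hlt
      have hcnp : 0 ≤ (p.2 - p.1) / α := div_nonneg (by linarith) hα.le
      have hflnn : (0:ℤ) ≤ ⌊(p.2 - p.1) / α⌋ := Int.floor_nonneg.2 hcnp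
      set m : ℕ := (⌊(-(p.1 - p.2)) / α⌋ + 1).toNat with hmdef
      have hneg : -(p.1 - p.2) = p.2 - p.1 := by ring
      have hm : (m : ℤ) = ⌊(p.2 - p.1) / α⌋ + 1 := by
        rw [hmdef, hneg, Int.toNat_of_nonneg (by omega)]
      rw [hn₂ p ha hlt m hm]
      have hF : Fc (p.1 - p.2) = W α μ φ b₁ m (p.1 - p.2) := rfl
      rw [hF, W]
      set c : ℝ := p.1 - p.2 with hc
      -- rewrite the product
      have hprod : (∏ i ∈ Finset.range m, b₁ (p.2 - p.1 - (i : ℝ) * α))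
          = ∏ i ∈ Finset.range m, b₁ (-c - (i : ℝ) * α) := by
        refine Finset.prod_congr rfl fun i _ => ?_
        congr 1; rw [hc]; ring
      have hφarg : (m : ℝ) * α + p.1 - p.2 = (m : ℝ) * α + c := by rw [hc]; ring
      have hint : ∫ s in (0:ℝ)..(p.2 - p.1 - ((m : ℝ) - 1) * α),
          μ (s + (m : ℝ) * α + p.1 - p.2) = P μ α - P μ ((m : ℝ) * α + c) := by
        have h3 : ∫ s in (0:ℝ)..(p.2 - p.1 - ((m : ℝ) - 1) * α),
            μ (s + (m : ℝ) * α + p.1 - p.2)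
            = ∫ s in (0:ℝ)..(p.2 - p.1 - ((m : ℝ) - 1) * α),
              μ (s + ((m : ℝ) * α + c)) := by
          apply intervalIntegral.integral_congr
          intro s _; congr 1; rw [hc]; ring
        rw [h3, P_shift hμc]
        have h4 : p.2 - p.1 - ((m : ℝ) - 1) * α + ((m : ℝ) * α + c) = α := by
          rw [hc]; ring
        rw [h4]
      rw [hprod, hφarg, hint]
      simp only [Ee, ← hPα]
      set A := (∏ i ∈ Finset.range m, b₁ (-c - (i : ℝ) * α)) * φ ((m : ℝ) * α + c) with hA
      have hgen : ∀ x1 x2 x3 : ℝ, A * Real.exp x1 * Real.exp x2 * Real.exp x3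
          = A * Real.exp (x1 + x2) * Real.exp x3 := by
        intro x1 x2 x3; rw [Real.exp_add]; ring
      rw [hgen]
      congr 2
      ring
  have hFloc : LocallyIntegrable Fc volume := F_locInt hα hμc hφ hb₁.continuous
  have hEecont : Continuous (Ee μ) := ((P_cont hμc).neg).rexp
  have hgloc : LocallyIntegrable (fun p : ℝ × ℝ => Fc (p.1 - p.2) * Ee μ p.1) volume :=
    g_locInt hFloc hEecont
  constructor
  · -- local integrability
    intro x hx
    obtain ⟨K, hKc, hKn⟩ := exists_compact_mem_nhds x
    refine ⟨K ∩ Q, Filter.inter_mem (mem_nhdsWithin_of_mem_nhds hKn) self_mem_nhdsWithin, ?_⟩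
    have hgK : IntegrableOn (fun p : ℝ × ℝ => Fc (p.1 - p.2) * Ee μ p.1) (K ∩ Q) volume :=
      (hgloc.integrableOn_isCompact hKc).mono_set Set.inter_subset_left
    exact hgK.congr_fun (fun p hp => (hfact p hp.2.1.le hp.2.2.le).symm)
      (hKc.measurableSet.inter hQmeas)
  · -- weak solution
    intro ψ hψ hψcs hψQ
    set Φ : ℝ × ℝ → ℝ := fun p => ψ p * Ee μ p.1 with hΦdef
    have hEe1 : ContDiff ℝ 1 (Ee μ) := by
      rw [contDiff_one_iff_deriv]
      constructor
      · exact fun a => ((Ee_deriv hμc a).differentiableAt)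
      · have : deriv (Ee μ) = fun a => -(μ a) * Ee μ a :=
          funext fun a => (Ee_deriv hμc a).deriv
        rw [this]
        exact (hμc.neg).mul hEecont
    have hΦc : ContDiff ℝ 1 Φ := (hψ.of_le (by simp)).mul (hEe1.comp contDiff_fst)
    set dl : ℝ × ℝ → ℝ := fun p => fderiv ℝ Φ p ((1:ℝ), (1:ℝ)) with hdl
    have hΦsupp : HasCompactSupport Φ := hψcs.mul_right
    have htΦ : tsupport Φ ⊆ tsupport ψ := tsupport_mul_subset_left
    have hdlsupp : Function.support dl ⊆ tsupport Φ := by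
      intro p hp
      have : fderiv ℝ Φ p ≠ 0 := by
        intro h0
        apply hp
        show fderiv ℝ Φ p ((1:ℝ),(1:ℝ)) = 0
        rw [h0]; rfl
      exact support_fderiv_subset ℝ (f := Φ) this
    have hdlcont : Continuous dl :=
      (hΦc.continuous_fderiv one_ne_zero).clm_apply continuous_const
    -- key pointwise identity
    have hkey : ∀ p : ℝ × ℝ, dl p =
        (fderiv ℝ ψ p ((0:ℝ), (1:ℝ)) + fderiv ℝ ψ p ((1:ℝ), (0:ℝ))
          - μ p.1 * ψ p) * Ee μ p.1 := by
      intro p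
      have hψf : HasFDerivAt ψ (fderiv ℝ ψ p) p :=
        (hψ.differentiable (by simp) p).hasFDerivAt
      have hEf : HasFDerivAt (fun q : ℝ × ℝ => Ee μ q.1)
          ((-(μ p.1) * Ee μ p.1) • (ContinuousLinearMap.fst ℝ ℝ ℝ)) p :=
        (Ee_deriv hμc p.1).comp_hasFDerivAt p hasFDerivAt_fst
      have hmul := hψf.mul hEf
      have h₁ : fderiv ℝ Φ p = ψ p • ((-(μ p.1) * Ee μ p.1) • ContinuousLinearMap.fst ℝ ℝ ℝ)
          + Ee μ p.1 • fderiv ℝ ψ p := hmul.fderiv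
      have h₂ : fderiv ℝ ψ p ((1:ℝ), (1:ℝ))
          = fderiv ℝ ψ p ((1:ℝ), (0:ℝ)) + fderiv ℝ ψ p ((0:ℝ), (1:ℝ)) := by
        rw [← map_add]
        norm_num
      rw [hdl]
      simp only [h₁, ContinuousLinearMap.add_apply, ContinuousLinearMap.smul_apply,
        ContinuousLinearMap.coe_fst', smul_eq_mul, h₂]
      ring
    -- bounds on the support of ψ
    obtain ⟨M₀, hM₀⟩ := hψcs.isCompact.isBounded.subset_closedBall 0
    set M : ℝ := max M₀ 0 with hMdef
    have hM0 : 0 ≤ M := le_max_right _ _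
    have hMsub : tsupport ψ ⊆ Metric.closedBall 0 M :=
      hM₀.trans (Metric.closedBall_subset_closedBall (le_max_left _ _))
    have hdl_zero : ∀ p : ℝ × ℝ, p ∉ tsupport ψ → dl p = 0 := by
      intro p hp
      by_contra h
      exact hp (htΦ (hdlsupp h))
    have hdl_norm : ∀ p : ℝ × ℝ, dl p ≠ 0 → ‖p‖ ≤ M := by
      intro p hp
      exact mem_closedBall_zero_iff.1 (hMsub (htΦ (hdlsupp hp)))
    obtain ⟨C, hC⟩ := (hψcs.mul_right.fderiv (𝕜 := ℝ)).exists_bound_of_continuous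
      (hΦc.continuous_fderiv one_ne_zero)
    have hCdl : ∀ p : ℝ × ℝ, ‖dl p‖ ≤ C * ‖((1:ℝ),(1:ℝ))‖ := by
      intro p
      calc ‖dl p‖ ≤ ‖fderiv ℝ Φ p‖ * ‖((1:ℝ),(1:ℝ))‖ :=
            (fderiv ℝ Φ p).le_opNorm _
      _ ≤ C * ‖((1:ℝ),(1:ℝ))‖ := by
            apply mul_le_mul_of_nonneg_right (hC p) (norm_nonneg _)
    have hC0 : 0 ≤ C * ‖((1:ℝ),(1:ℝ))‖ := le_trans (norm_nonneg _) (hCdl 0)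
    -- the chain of equalities
    have step1 : ∫ p in Q, (fderiv ℝ ψ p ((0:ℝ), (1:ℝ)) + fderiv ℝ ψ p ((1:ℝ), (0:ℝ))
          - μ p.1 * ψ p) * n p = ∫ p in Q, Fc (p.1 - p.2) * dl p := by
      apply setIntegral_congr_fun hQmeas
      intro p hp
      show (fderiv ℝ ψ p ((0:ℝ), (1:ℝ)) + fderiv ℝ ψ p ((1:ℝ), (0:ℝ))
          - μ p.1 * ψ p) * n p = Fc (p.1 - p.2) * dl p
      rw [hfact p hp.1.le hp.2.le, hkey p]
      ring
    have step2 : ∫ p in Q, Fc (p.1 - p.2) * dl p = ∫ p : ℝ × ℝ, Fc (p.1 - p.2) * dl p := by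
      apply setIntegral_eq_integral_of_ae_compl_eq_zero
      refine Filter.Eventually.of_forall fun p hp => ?_
      rw [hdl_zero p (fun hmem => hp (hψQ hmem)), mul_zero]
    have step3 : ∫ p : ℝ × ℝ, Fc (p.1 - p.2) * dl p
        = ∫ q : ℝ × ℝ, Fc q.1 * dl (q.1 + q.2, q.2) := by
      rw [← shear_mp.integral_comp shear.measurableEmbedding
        (fun p : ℝ × ℝ => Fc (p.1 - p.2) * dl p)]
      congr 1
      funext q
      show Fc (q.1 + q.2 - q.2) * dl (q.1 + q.2, q.2) = _
      rw [add_sub_cancel_right]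
    have hHint : Integrable (fun q : ℝ × ℝ => Fc q.1 * dl (q.1 + q.2, q.2)) volume :=
      shear_comp_bound hFloc hdlcont.aestronglyMeasurable hM0 hC0 hdl_norm hCdl
    have step4 : ∫ q : ℝ × ℝ, Fc q.1 * dl (q.1 + q.2, q.2)
        = ∫ c : ℝ, ∫ t : ℝ, Fc c * dl (c + t, t) := by
      rw [Measure.volume_eq_prod] at hHint ⊢
      exact MeasureTheory.integral_prod _ hHint
    have step5 : ∀ c : ℝ, ∫ t : ℝ, dl (c + t, t) = 0 := by
      intro c
      have hu : ∀ t : ℝ, HasDerivAt (fun t : ℝ => Φ (c + t, t)) (dl (c + t, t)) t := by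
        intro t
        have hL : HasDerivAt (fun t : ℝ => ((c + t, t) : ℝ × ℝ)) (((1:ℝ), (1:ℝ)) : ℝ × ℝ) t :=
          HasDerivAt.prodMk ((hasDerivAt_id t).const_add c) (hasDerivAt_id t)
        have hΦf : HasFDerivAt Φ (fderiv ℝ Φ (c + t, t)) (c + t, t) :=
          (hΦc.differentiable one_ne_zero (c + t, t)).hasFDerivAt
        exact HasFDerivAt.comp_hasDerivAt (l := Φ)
          (f := fun t : ℝ => ((c + t, t) : ℝ × ℝ)) t hΦf hL
      set M' : ℝ := M + 1 with hM'
      have hzero : ∀ t : ℝ, t ∉ Set.Ioc (-M') M' → dl (c + t, t) = 0 := by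
        intro t ht
        apply hdl_zero
        intro hmem
        apply ht
        have h5 : ‖((c + t, t) : ℝ × ℝ)‖ ≤ M := mem_closedBall_zero_iff.1 (hMsub hmem)
        have h6 : |t| ≤ M := le_trans (by simpa using norm_snd_le ((c + t, t) : ℝ × ℝ)) h5
        rw [abs_le] at h6
        exact ⟨by linarith, by linarith⟩
      have hΦzero : ∀ t : ℝ, t ∉ Set.Ioo (-M') M' → Φ (c + t, t) = 0 := by
        intro t ht
        apply image_eq_zero_of_notMem_tsupport
        intro hmem
        apply ht
        have h5 : ‖((c + t, t) : ℝ × ℝ)‖ ≤ M := mem_closedBall_zero_iff.1 (hMsub (htΦ hmem))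
        have h6 : |t| ≤ M := le_trans (by simpa using norm_snd_le ((c + t, t) : ℝ × ℝ)) h5
        rw [abs_le] at h6
        exact ⟨by linarith, by linarith⟩
      rw [← setIntegral_eq_integral_of_ae_compl_eq_zero
        (Filter.Eventually.of_forall (fun t ht => hzero t ht))]
      rw [← intervalIntegral.integral_of_le (by linarith : -M' ≤ M')]
      have hline : Continuous (fun t : ℝ => ((c + t, t) : ℝ × ℝ)) :=
        (continuous_const.add continuous_id).prodMk continuous_id
      rw [intervalIntegral.integral_eq_sub_of_hasDerivAt (fun t _ => hu t)
        ((hdlcont.comp hline).intervalIntegrable _ _)]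
      rw [hΦzero M' (fun h => absurd h.2 (lt_irrefl M')),
        hΦzero (-M') (fun h => absurd h.1 (lt_irrefl (-M')))]
      ring
    rw [step1, step2, step3, step4]
    have : ∀ c : ℝ, ∫ t : ℝ, Fc c * dl (c + t, t) = 0 := by
      intro c
      rw [MeasureTheory.integral_const_mul, step5 c, mul_zero]
    simp only [this, integral_zero]
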